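/- arXiv:1802.09639 — 2 statements merged into one kernel-verified Lean document; each statement's English description precedes it below -/
import Mathlib

section
/- Let c > 0 and ε > 0 be reals with γ := c ε² / 2 > 1, let M̲ ≥ 2 be an integer, and let W : ℕ → ℕ assign to each M ≥ 1 an integer window size with W(M) ≥ c · max{log M̲, log M} (natural logarithm). Then P( there exists an integer M ≥ 1 such that π(U_M) − R_{M,W(M)} > ε ) ≤ M̲^{1−γ} + Σ_{M=M̲}^{∞} M^{−γ} ≤ (γ/(γ−1)) · (M̲ − 1)^{1−γ}. -/
/-! Conditionally on the first `M` draws, the unobserved set `U_M` is fixed and the window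
indicators `1{ω_{M+i} ∈ U_M}` are i.i.d. Bernoulli with mean `π(U_M)`, so Hoeffding's inequality
bounds the probability that `π(U_M) - R_{M,W}` exceeds `ε` by `exp(-2Wε²) ≤ max(M̲, M)^{-γ}`.
A union bound over `M`, comparing the tail `∑_{M ≥ M̲} M^{-γ}` with `∫_{M̲-1}^∞ x^{-γ} dx`,
gives both inequalities. -/

open MeasureTheory ProbabilityTheory Real

theorem ProbabilityTheory.IndepFun.measure_prodMk_mem_le {Ω α β : Type*} [MeasurableSpace Ω]
    [MeasurableSpace α] [MeasurableSpace β] {P : Measure Ω} [IsProbabilityMeasure P]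
    {X : Ω → α} {Y : Ω → β}
    (hX : AEMeasurable X P) (hY : AEMeasurable Y P) (hXY : IndepFun X Y P)
    {E : Set (α × β)} (hE : MeasurableSet E) {δ : ENNReal}
    (hδ : ∀ a, P {x | (a, Y x) ∈ E} ≤ δ) :
    P {x | (X x, Y x) ∈ E} ≤ δ := by
  have := Measure.isProbabilityMeasure_map (μ := P) hX
  calc P {x | (X x, Y x) ∈ E} = (P.map X).prod (P.map Y) E := by
        rw [← hXY.map_prod_eq_prod_map_map hX hY,
          Measure.map_apply_of_aemeasurable (hX.prodMk hY) hE]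
        rfl
    _ = ∫⁻ a, P {x | (a, Y x) ∈ E} ∂P.map X := by
        rw [Measure.prod_apply hE]
        congr! 2 with a
        exact Measure.map_apply_of_aemeasurable hY (measurable_prodMk_left hE)
    _ ≤ ∫⁻ _, δ ∂P.map X := lintegral_mono hδ
    _ = δ := by simp

theorem measureReal_sum_sub_indicator_ge_le {Ω B ι : Type*} [MeasurableSpace Ω]
    [MeasurableSpace B] {P : Measure Ω} [IsProbabilityMeasure P] {μ : Measure B}
    {Z : ι → Ω → B} (hZ : ∀ i, Measurable (Z i)) (hindep : iIndepFun Z P)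
    (hlaw : ∀ i, P.map (Z i) = μ) {S : Set B} (hS : MeasurableSet S) (s : Finset ι)
    {t : ℝ} (ht : 0 ≤ t) :
    P.real {x | t ≤ ∑ i ∈ s, (μ.real S - S.indicator 1 (Z i x))}
      ≤ exp (-2 * t ^ 2 / s.card) := by
  have hdev : Measurable fun b => μ.real S - S.indicator (1 : B → ℝ) b :=
    measurable_const.sub (measurable_one.indicator hS)
  have hsubG (i : ι) : HasSubgaussianMGF (fun x => μ.real S - S.indicator 1 (Z i x))
      ((‖μ.real S - (μ.real S - 1)‖₊ / 2) ^ 2) P := by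
    have hind : (fun x => S.indicator (1 : B → ℝ) (Z i x)) = (Z i ⁻¹' S).indicator 1 := rfl
    refine hasSubgaussianMGF_of_mem_Icc_of_integral_eq_zero (hdev.comp (hZ i)).aemeasurable
      (ae_of_all _ fun x => ?_) ?_
    · by_cases hx : Z i x ∈ S <;> simp [hx]
    · rw [integral_sub (integrable_const _) (hind ▸ (integrable_const 1).indicator (hZ i hS)),
        hind, integral_indicator_one (hZ i hS), ← map_measureReal_apply (hZ i) hS, hlaw i]
      simp
  refine (HasSubgaussianMGF.measure_sum_ge_le_of_iIndepFun (hindep.comp _ fun _ => hdev)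
    (fun i _ => hsubG i) ht).trans_eq (congrArg exp ?_)
  simp only [sub_sub_cancel, nnnorm_one, Finset.sum_const, nsmul_eq_mul, NNReal.coe_mul,
    NNReal.coe_natCast, NNReal.coe_pow, NNReal.coe_div, NNReal.coe_one, NNReal.coe_ofNat]
  ring

theorem tsum_Ici_rpow_neg_le {γ : ℝ} (hγ : 1 < γ) {a : ℕ} (ha : 2 ≤ a) :
    ∑' m : Set.Ici a, ((m : ℕ) : ℝ) ^ (-γ) ≤ ((a : ℝ) - 1) ^ (1 - γ) / (γ - 1) := by
  obtain ⟨N, rfl⟩ : ∃ N, a = N + 1 := ⟨a - 1, by omega⟩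
  have hN : (0 : ℝ) < N := by exact_mod_cast (by omega : 0 < N)
  have hshift : ∑' n : ℕ, ((n + N + 1 : ℕ) : ℝ) ^ (-γ)
      = ∑' m : Set.Ici (N + 1), ((m : ℕ) : ℝ) ^ (-γ) :=
    Function.Injective.tsum_eq (g := fun n : ℕ => (⟨n + N + 1, by simp⟩ : Set.Ici (N + 1)))
      (f := fun m : Set.Ici (N + 1) => ((m : ℕ) : ℝ) ^ (-γ))
      (fun n n' h => by simpa using h)
      fun m _ => ⟨m - (N + 1), Subtype.ext <| by
        have := m.2
        rw [Set.mem_Ici] at this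
        dsimp only
        omega⟩
  have hint := integral_Ioi_rpow_of_lt (a := -γ) (by linarith) hN
  rw [← hshift, show (((N + 1 : ℕ) : ℝ) - 1) = N by push_cast; ring]
  calc ∑' n : ℕ, ((n + N + 1 : ℕ) : ℝ) ^ (-γ) ≤ ∫ x in Set.Ioi (N : ℝ), x ^ (-γ) :=
        AntitoneOn.tsum_comp_add_le_integral N
          (fun x hx y _ hxy => rpow_le_rpow_of_nonpos (hN.trans_le hx) hxy (by linarith))
          (integrableOn_Ioi_rpow_of_lt (by linarith) hN)
          (fun x hx => rpow_nonneg (hN.trans hx).le _)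
    _ = (N : ℝ) ^ (1 - γ) / (γ - 1) := by
        rw [hint, show -γ + 1 = 1 - γ by ring, neg_div, ← div_neg, neg_sub]

theorem measure_exists_mem_le_of_le_rpow_neg {Ω : Type*} [MeasurableSpace Ω] (P : Measure Ω)
    (Q : ℕ → Set Ω) {γ : ℝ} (hγ : 1 < γ) {a : ℕ}
    (hsmall : ∀ M, 1 ≤ M → M < a → P (Q M) ≤ ENNReal.ofReal ((a : ℝ) ^ (-γ)))
    (hlarge : ∀ M, a ≤ M → P (Q M) ≤ ENNReal.ofReal ((M : ℝ) ^ (-γ))) :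
    P {x | ∃ M, 1 ≤ M ∧ x ∈ Q M}
      ≤ ENNReal.ofReal ((a : ℝ) ^ (1 - γ) + ∑' m : Set.Ici a, ((m : ℕ) : ℝ) ^ (-γ)) := by
  have hsplit :
      {x | ∃ M, 1 ≤ M ∧ x ∈ Q M} ⊆ (⋃ M ∈ Finset.Ico 1 a, Q M) ∪ ⋃ m : Set.Ici a, Q m := by
    rintro x ⟨M, hM, hx⟩
    by_cases hMa : M < a
    · exact Or.inl (Set.mem_biUnion (Finset.mem_Ico.2 ⟨hM, hMa⟩) hx)
    · exact Or.inr (Set.mem_iUnion.2 ⟨⟨M, not_lt.1 hMa⟩, hx⟩)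
  have hsummable : Summable fun m : Set.Ici a => ((m : ℕ) : ℝ) ^ (-γ) :=
    (summable_nat_rpow.2 (by linarith)).subtype _
  have hfinite : ((a - 1 : ℕ) : ℝ) * (a : ℝ) ^ (-γ) ≤ (a : ℝ) ^ (1 - γ) := by
    rw [sub_eq_add_neg, rpow_add' (Nat.cast_nonneg a) (by linarith), rpow_one]
    gcongr
    exact Nat.sub_le a 1
  calc P {x | ∃ M, 1 ≤ M ∧ x ∈ Q M}
      ≤ P (⋃ M ∈ Finset.Ico 1 a, Q M) + P (⋃ m : Set.Ici a, Q m) :=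
        (measure_mono hsplit).trans (measure_union_le _ _)
    _ ≤ ∑ _M ∈ Finset.Ico 1 a, ENNReal.ofReal ((a : ℝ) ^ (-γ))
          + ∑' m : Set.Ici a, ENNReal.ofReal (((m : ℕ) : ℝ) ^ (-γ)) := by
        gcongr
        · exact (measure_biUnion_finset_le _ _).trans <| Finset.sum_le_sum fun M hM =>
            hsmall M (Finset.mem_Ico.1 hM).1 (Finset.mem_Ico.1 hM).2
        · exact (measure_iUnion_le _).trans <| ENNReal.tsum_le_tsum fun m => hlarge m m.2
    _ = ENNReal.ofReal (((a - 1 : ℕ) : ℝ) * (a : ℝ) ^ (-γ))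
          + ENNReal.ofReal (∑' m : Set.Ici a, ((m : ℕ) : ℝ) ^ (-γ)) := by
        rw [Finset.sum_const, Nat.card_Ico, nsmul_eq_mul, ENNReal.ofReal_mul (Nat.cast_nonneg _),
          ENNReal.ofReal_natCast,
          ENNReal.ofReal_tsum_of_nonneg (fun m => rpow_nonneg (Nat.cast_nonneg _) _) hsummable]
    _ ≤ ENNReal.ofReal ((a : ℝ) ^ (1 - γ) + ∑' m : Set.Ici a, ((m : ℕ) : ℝ) ^ (-γ)) := by
        rw [ENNReal.ofReal_add (rpow_nonneg (Nat.cast_nonneg a) _)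
          (tsum_nonneg fun m => rpow_nonneg (Nat.cast_nonneg _) _)]
        gcongr

noncomputable def unobservedMass {Ω B : Type*} [MeasurableSpace B] (μ : Measure B)
    (ω : ℕ → Ω → B) (M : ℕ) (x : Ω) : ℝ :=
  (μ {b | ∀ i ∈ Finset.Icc 1 M, ω i x ≠ b}).toReal

noncomputable def discoveryRate {Ω B : Type*} [DecidableEq B] (ω : ℕ → Ω → B) (M W : ℕ)
    (x : Ω) : ℝ :=
  (1 / (W : ℝ)) * ∑ i ∈ Finset.Icc 1 W,
    (if ∀ j ∈ Finset.Icc (1 : ℕ) M, ω j x ≠ ω (M + i) x then (1 : ℝ) else 0)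

theorem unobservedMass_sub_discoveryRate_eq {Ω B : Type*} [DecidableEq B] [MeasurableSpace B]
    (μ : Measure B) (ω : ℕ → Ω → B) (M : ℕ) {W : ℕ} (hW : W ≠ 0) (x : Ω) :
    unobservedMass μ ω M x - discoveryRate ω M W x
      = (W : ℝ)⁻¹ * ∑ j ∈ (Finset.Icc 1 W).map (addLeftEmbedding M),
          (μ.real (Set.range fun i : Finset.Icc 1 M => ω i x)ᶜ
            - (Set.range fun i : Finset.Icc 1 M => ω i x)ᶜ.indicator 1 (ω j x)) := by
  have hunobs : {b | ∀ i ∈ Finset.Icc 1 M, ω i x ≠ b}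
      = (Set.range fun i : Finset.Icc 1 M => ω i x)ᶜ := by
    ext b
    simp
  rw [unobservedMass, discoveryRate, Finset.sum_sub_distrib, Finset.sum_const, Finset.card_map,
    Nat.card_Icc, Nat.add_sub_cancel, nsmul_eq_mul, mul_sub, inv_mul_cancel_left₀ (by simpa),
    Finset.sum_map, hunobs, one_div, measureReal_def]
  congr! 3 with i
  simp [Set.indicator_apply]

theorem measure_lt_unobservedMass_sub_discoveryRate_le {Ω B : Type*} [MeasurableSpace Ω]
    {P : Measure Ω} [IsProbabilityMeasure P] [Countable B] [DecidableEq B] [MeasurableSpace B]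
    [MeasurableSingletonClass B] {μ : Measure B} {ω : ℕ → Ω → B} (hmeas : ∀ i, Measurable (ω i))
    (hindep : iIndepFun ω P) (hdist : ∀ i, P.map (ω i) = μ) (M : ℕ) {W : ℕ} (hW : 0 < W)
    {ε : ℝ} (hε : 0 ≤ ε) :
    P {x | ε < unobservedMass μ ω M x - discoveryRate ω M W x}
      ≤ ENNReal.ofReal (exp (-2 * W * ε ^ 2)) := by
  set T := (Finset.Icc 1 W).map (addLeftEmbedding M)
  let E : Set ((Finset.Icc 1 M → B) × (T → B)) :=
    {p | W * ε ≤ ∑ j, (μ.real (Set.range p.1)ᶜ - (Set.range p.1)ᶜ.indicator 1 (p.2 j))}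
  have hdisj : Disjoint (Finset.Icc 1 M) T := by
    simp only [T, Finset.map_add_left_Icc, Finset.disjoint_left, Finset.mem_Icc]
    omega
  have hcard : Fintype.card T = W := by simp [T]
  have hsub : {x | ε < unobservedMass μ ω M x - discoveryRate ω M W x}
      ⊆ {x | ((fun i : Finset.Icc 1 M => ω i x), (fun j : T => ω j x)) ∈ E} := by
    intro x hx
    rw [Set.mem_ofPred_eq, unobservedMass_sub_discoveryRate_eq μ ω M hW.ne',
      lt_inv_mul_iff₀ (by exact_mod_cast hW), ← Finset.sum_coe_sort] at hx
    exact hx.le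
  have hsection (v : Finset.Icc 1 M → B) :
      P {x | (v, fun j : T => ω j x) ∈ E} ≤ ENNReal.ofReal (exp (-2 * W * ε ^ 2)) := by
    change P {x | (W : ℝ) * ε ≤ ∑ j : T,
      (μ.real (Set.range v)ᶜ - (Set.range v)ᶜ.indicator 1 (ω j x))} ≤ _
    rw [← ofReal_measureReal]
    refine ENNReal.ofReal_le_ofReal ((measureReal_sum_sub_indicator_ge_le
      (Z := fun j : T => ω j) (fun j => hmeas j)
      (hindep.precomp Subtype.val_injective) (fun j => hdist j)
      (Set.to_countable _).measurableSet Finset.univ (by positivity)).trans_eq ?_)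
    have hW' : (W : ℝ) ≠ 0 := by exact_mod_cast hW.ne'
    rw [Finset.card_univ, hcard]
    field_simp
  exact (measure_mono hsub).trans <|
    (hindep.indepFun_finset _ T hdisj hmeas).measure_prodMk_mem_le
    (measurable_pi_lambda _ fun i : Finset.Icc 1 M => hmeas i).aemeasurable
    (measurable_pi_lambda _ fun j : T => hmeas j).aemeasurable
    (Set.to_countable E).measurableSet hsection

theorem discovery_rate_failure_bound_general
    {Ω : Type*} [MeasurableSpace Ω] (P : Measure Ω) [IsProbabilityMeasure P]
    {B : Type*} [Fintype B] [DecidableEq B]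
    [MeasurableSpace B] [MeasurableSingletonClass B]
    (μ : Measure B)
    (ω : ℕ → Ω → B)
    (hmeas : ∀ i, Measurable (ω i))
    (hindep : iIndepFun ω P)
    (hdist : ∀ i, Measure.map (ω i) P = μ)
    (c ε γ : ℝ) (hc : 0 < c) (hε : 0 < ε)
    (hγdef : γ = c * ε ^ 2 / 2) (hγ : 1 < γ)
    (Mlow : ℕ) (hMlow : 2 ≤ Mlow)
    (W : ℕ → ℕ)
    (hW : ∀ M : ℕ, 1 ≤ M → c * max (Real.log Mlow) (Real.log M) ≤ (W M : ℝ)) :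
    P {x | ∃ M : ℕ, 1 ≤ M ∧
          (μ {b | ∀ i ∈ Finset.Icc 1 M, ω i x ≠ b}).toReal
            - (1 / (W M : ℝ)) * ∑ i ∈ Finset.Icc 1 (W M),
                (if ∀ j ∈ Finset.Icc (1 : ℕ) M, ω j x ≠ ω (M + i) x then (1 : ℝ) else 0)
            > ε}
        ≤ ENNReal.ofReal
            ((Mlow : ℝ) ^ (1 - γ) + ∑' m : Set.Ici Mlow, ((m : ℕ) : ℝ) ^ (-γ))
    ∧ (Mlow : ℝ) ^ (1 - γ) + ∑' m : Set.Ici Mlow, ((m : ℕ) : ℝ) ^ (-γ)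
        ≤ (γ / (γ - 1)) * ((Mlow : ℝ) - 1) ^ (1 - γ) := by
  have hMlow' : (2 : ℝ) ≤ Mlow := by exact_mod_cast hMlow
  have hlogMlow : 0 < log Mlow := log_pos (by linarith)
  have hWpos (M : ℕ) (hM : 1 ≤ M) : 0 < W M := by
    have := mul_pos hc (hlogMlow.trans_le (le_max_left _ (log M)))
    exact_mod_cast this.trans_le (hW M hM)
  have hfail (M : ℕ) (hM : 1 ≤ M) (a : ℕ) (ha : 0 < a) (hlog : log a ≤ max (log Mlow) (log M)) :
      P {x | ε < unobservedMass μ ω M x - discoveryRate ω M (W M) x}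
        ≤ ENNReal.ofReal ((a : ℝ) ^ (-γ)) := by
    refine (measure_lt_unobservedMass_sub_discoveryRate_le hmeas hindep hdist M (hWpos M hM)
      hε.le).trans (ENNReal.ofReal_le_ofReal ?_)
    rw [rpow_def_of_pos (by exact_mod_cast ha), exp_le_exp, hγdef]
    have := (mul_le_mul_of_nonneg_left hlog hc.le).trans (hW M hM)
    nlinarith [sq_nonneg ε, (W M).cast_nonneg (α := ℝ)]
  refine ⟨measure_exists_mem_le_of_le_rpow_neg P _ hγ
    (fun M hM _ => hfail M hM Mlow (by omega) (le_max_left _ _))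
    (fun M hM => hfail M (by omega) M (by omega) (le_max_right _ _)), ?_⟩
  have hγ1 : 0 < γ - 1 := by linarith
  calc (Mlow : ℝ) ^ (1 - γ) + ∑' m : Set.Ici Mlow, ((m : ℕ) : ℝ) ^ (-γ)
      ≤ ((Mlow : ℝ) - 1) ^ (1 - γ) + ((Mlow : ℝ) - 1) ^ (1 - γ) / (γ - 1) :=
        add_le_add (rpow_le_rpow_of_nonpos (by linarith) (by linarith) (by linarith))
          (tsum_Ici_rpow_neg_le hγ hMlow)
    _ = (γ / (γ - 1)) * ((Mlow : ℝ) - 1) ^ (1 - γ) := by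
        field_simp
        ring

/-- With window sizes `W M ≥ c · max (log M̲) (log M)` and `γ = c ε²/2 > 1`,
`P(∃ M ≥ 1, π(U_M) - R_{M,W M} > ε) ≤ M̲^(1-γ) + ∑_{M=M̲}^∞ M^(-γ)
  ≤ (γ/(γ-1)) (M̲-1)^(1-γ)`. -/
theorem discovery_rate_failure_bound
    {Ω : Type*} [MeasurableSpace Ω] (P : Measure Ω) [IsProbabilityMeasure P]
    {B : Type*} [Fintype B] [Nonempty B] [DecidableEq B]
    [MeasurableSpace B] [MeasurableSingletonClass B]
    (μ : Measure B) [IsProbabilityMeasure μ]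
    (ω : ℕ → Ω → B)
    (hmeas : ∀ i, Measurable (ω i))
    (hindep : iIndepFun ω P)
    (hdist : ∀ i, Measure.map (ω i) P = μ)
    (c ε γ : ℝ) (hc : 0 < c) (hε : 0 < ε)
    (hγdef : γ = c * ε ^ 2 / 2) (hγ : 1 < γ)
    (Mlow : ℕ) (hMlow : 2 ≤ Mlow)
    (W : ℕ → ℕ)
    (hW : ∀ M : ℕ, 1 ≤ M → c * max (Real.log Mlow) (Real.log M) ≤ (W M : ℝ)) :
    P {x | ∃ M : ℕ, 1 ≤ M ∧
          (μ {b | ∀ i ∈ Finset.Icc 1 M, ω i x ≠ b}).toReal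
            - (1 / (W M : ℝ)) * ∑ i ∈ Finset.Icc 1 (W M),
                (if ∀ j ∈ Finset.Icc (1 : ℕ) M, ω j x ≠ ω (M + i) x then (1 : ℝ) else 0)
            > ε}
        ≤ ENNReal.ofReal
            ((Mlow : ℝ) ^ (1 - γ) + ∑' m : Set.Ici Mlow, ((m : ℕ) : ℝ) ^ (-γ))
    ∧ (Mlow : ℝ) ^ (1 - γ) + ∑' m : Set.Ici Mlow, ((m : ℕ) : ℝ) ^ (-γ)
        ≤ (γ / (γ - 1)) * ((Mlow : ℝ) - 1) ^ (1 - γ) :=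
  discovery_rate_failure_bound_general P μ ω hmeas hindep hdist c ε γ hc hε hγdef hγ Mlow hMlow W hW
end

section
/- Suppose the system is low-complexity with parameters (α_0, K_0), let α > α_0, let δ_0 ∈ (0, 1), and let M be any integer with M ≥ (K_0 · log 2 + log(1/δ_0)) / (α − α_0). Then with probability at least 1 − δ_0 the observed active sets after M samples contain mass at least 1 − α, i.e., P( π(O_M) ≥ 1 − α ) ≥ 1 − δ_0. -/
open MeasureTheory ProbabilityTheory Real

/-!
If the samples `ω₁, …, ω_M` leave unobserved a mass larger than `α`, then, since the at most `K₀`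
points of `I` carry mass more than `1 - α₀`, the unobserved part of `I` is a subset `S ⊆ I` of mass
more than `ε = α - α₀` that no sample hits. For a fixed such `S` this has probability
`(1 - μ S) ^ M ≤ exp (-ε M)`, and there are at most `2 ^ K₀` candidates, so a union bound gives
failure probability at most `2 ^ K₀ exp (-ε M) ≤ δ₀`.
-/

lemma setOf_measureReal_observed_lt_subset {Ω ι B : Type*} [MeasurableSpace B] {μ : Measure B}
    [IsFiniteMeasure μ] (ω : ι → Ω → B) {α₀ α : ℝ} (I : Finset B)
    (hI : 1 - α₀ < μ.real I) (s : Finset ι) :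
    {x | μ.real {b | ∃ i ∈ s, ω i x = b} < 1 - α} ⊆
      ⋃ S ∈ I.powerset.filter (fun S : Finset B ↦ α - α₀ < μ.real ↑S), ⋂ i ∈ s, ω i ⁻¹' (↑S)ᶜ := by
  classical
  intro x (hx : μ.real _ < 1 - α)
  set O := {b | ∃ i ∈ s, ω i x = b}
  have hS : ((I.filter (· ∉ O) : Finset B) : Set B) = ↑I \ O := by ext; simp
  have hmass : α - α₀ < μ.real ↑(I.filter (· ∉ O)) := by
    rw [hS]
    have := le_measureReal_sdiff (μ := μ) (s₁ := ↑I) (s₂ := O)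
    linarith
  refine Set.mem_biUnion (Finset.mem_filter.2 ⟨Finset.mem_powerset.2 (Finset.filter_subset _ _),
    hmass⟩) ?_
  simp only [Set.mem_iInter, Set.mem_preimage, Set.mem_compl_iff, Finset.coe_filter]
  exact fun i hi h ↦ h.2 ⟨i, hi, rfl⟩

section Sampling

variable {Ω ι B : Type*} [MeasurableSpace Ω] [MeasurableSpace B] {P : Measure Ω} {μ : Measure B}
  {ω : ι → Ω → B}

lemma measure_biInter_preimage_eq_pow [NeZero μ] (hindep : iIndepFun ω P)
    (hdist : ∀ i, P.map (ω i) = μ) (s : Finset ι) {A : Set B} (hA : MeasurableSet A) :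
    P (⋂ i ∈ s, ω i ⁻¹' A) = μ A ^ s.card := by
  have hω : ∀ i, P (ω i ⁻¹' A) = μ A := fun i ↦ by
    have : AEMeasurable (ω i) P := .of_map_ne_zero (by rw [hdist i]; exact NeZero.ne μ)
    rw [← hdist i, Measure.map_apply_of_aemeasurable this hA]
  rw [hindep.measure_inter_preimage_eq_mul s (fun _ _ ↦ hA)]
  simp [hω]

lemma measure_biInter_preimage_compl_le [IsProbabilityMeasure μ] (hindep : iIndepFun ω P)
    (hdist : ∀ i, P.map (ω i) = μ) (s : Finset ι) {A : Set B} (hA : MeasurableSet A) :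
    P (⋂ i ∈ s, ω i ⁻¹' Aᶜ) ≤ ENNReal.ofReal (exp (-(μ.real A * s.card))) := by
  rw [measure_biInter_preimage_eq_pow hindep hdist s hA.compl, ← ofReal_measureReal,
    ← ENNReal.ofReal_pow measureReal_nonneg, probReal_compl_eq_one_sub hA]
  refine ENNReal.ofReal_le_ofReal ?_
  calc (1 - μ.real A) ^ s.card ≤ exp (-μ.real A) ^ s.card := by
        gcongr
        · exact sub_nonneg.2 measureReal_le_one
        · exact one_sub_le_exp_neg _
    _ = exp (-(μ.real A * s.card)) := by rw [← exp_nat_mul]; ring_nf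

lemma measure_biUnion_biInter_preimage_compl_le [IsProbabilityMeasure μ]
    (hindep : iIndepFun ω P) (hdist : ∀ i, P.map (ω i) = μ) {κ : Type*} (𝒮 : Finset κ)
    {A : κ → Set B} (hA : ∀ k ∈ 𝒮, MeasurableSet (A k)) {ε : ℝ} (hε : ∀ k ∈ 𝒮, ε ≤ μ.real (A k))
    (s : Finset ι) :
    P (⋃ k ∈ 𝒮, ⋂ i ∈ s, ω i ⁻¹' (A k)ᶜ) ≤ 𝒮.card * ENNReal.ofReal (exp (-(ε * s.card))) := by
  calc P (⋃ k ∈ 𝒮, ⋂ i ∈ s, ω i ⁻¹' (A k)ᶜ)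
      ≤ ∑ k ∈ 𝒮, P (⋂ i ∈ s, ω i ⁻¹' (A k)ᶜ) := measure_biUnion_finset_le _ _
    _ ≤ ∑ _k ∈ 𝒮, ENNReal.ofReal (exp (-(ε * s.card))) := by
      refine Finset.sum_le_sum fun k hk ↦ ?_
      refine (measure_biInter_preimage_compl_le hindep hdist s (hA k hk)).trans ?_
      gcongr
      exact hε k hk
    _ = 𝒮.card * ENNReal.ofReal (exp (-(ε * s.card))) := by rw [Finset.sum_const, nsmul_eq_mul]

end Sampling

lemma two_pow_mul_exp_neg_le {K : ℕ} {ε δ t : ℝ} (hε : 0 < ε) (hδ : 0 < δ)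
    (ht : (K * log 2 + log (1 / δ)) / ε ≤ t) :
    2 ^ K * exp (-(ε * t)) ≤ δ := by
  have hlog : log (2 ^ K / δ) ≤ ε * t := by
    rw [div_le_iff₀ hε, one_div, log_inv] at ht
    rw [log_div (by positivity) hδ.ne', log_pow]
    linarith
  calc 2 ^ K * exp (-(ε * t)) ≤ 2 ^ K * exp (-log (2 ^ K / δ)) := by gcongr
    _ = δ := by rw [exp_neg, exp_log (by positivity)]; field_simp

theorem lowComplexity_sample_complexity_general
    {Ω : Type*} [MeasurableSpace Ω] (P : Measure Ω) [IsProbabilityMeasure P]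
    {B : Type*}
    [MeasurableSpace B] [MeasurableSingletonClass B]
    (μ : Measure B) [IsProbabilityMeasure μ]
    (ω : ℕ → Ω → B)
    (hindep : iIndepFun ω P)
    (hdist : ∀ i, Measure.map (ω i) P = μ)
    (α₀ : ℝ) (K₀ : ℕ)
    (hlow : ∃ I : Finset B, I.card ≤ K₀ ∧ 1 - α₀ < (μ (I : Set B)).toReal)
    (α : ℝ) (hα : α₀ < α) (δ₀ : ℝ) (hδ₀0 : 0 < δ₀)
    (M : ℕ)
    (hM : ((K₀ : ℝ) * Real.log 2 + Real.log (1 / δ₀)) / (α - α₀) ≤ (M : ℝ)) :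
    1 - ENNReal.ofReal δ₀
      ≤ P {x | 1 - α ≤ (μ {b | ∃ i ∈ Finset.Icc 1 M, ω i x = b}).toReal} := by
  obtain ⟨I, hIcard, hImass⟩ := hlow
  set G := {x | 1 - α ≤ μ.real {b | ∃ i ∈ Finset.Icc 1 M, ω i x = b}}
  set 𝒮 := I.powerset.filter (fun S : Finset B ↦ α - α₀ < μ.real ↑S)
  have h𝒮 : (𝒮.card : ENNReal) ≤ 2 ^ K₀ := by
    calc (𝒮.card : ENNReal) ≤ I.powerset.card := by exact_mod_cast Finset.card_filter_le _ _
      _ = 2 ^ I.card := by rw [Finset.card_powerset]; push_cast; rfl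
      _ ≤ 2 ^ K₀ := pow_le_pow_right₀ one_le_two hIcard
  have hGc : P Gᶜ ≤ ENNReal.ofReal δ₀ := by
    calc P Gᶜ ≤ P (⋃ S ∈ 𝒮, ⋂ i ∈ Finset.Icc 1 M, ω i ⁻¹' (↑S)ᶜ) :=
          measure_mono fun x (hx : ¬1 - α ≤ _) ↦
            setOf_measureReal_observed_lt_subset ω I hImass _ (not_le.1 hx)
      _ ≤ 𝒮.card * ENNReal.ofReal (exp (-((α - α₀) * M))) := by
          simpa using measure_biUnion_biInter_preimage_compl_le hindep hdist 𝒮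
            (fun S _ ↦ S.finite_toSet.measurableSet) (fun S hS ↦ (Finset.mem_filter.1 hS).2.le)
            (Finset.Icc 1 M)
      _ ≤ ENNReal.ofReal (2 ^ K₀ * exp (-((α - α₀) * M))) := by
          rw [ENNReal.ofReal_mul (by positivity)]
          gcongr
          simpa using h𝒮
      _ ≤ ENNReal.ofReal δ₀ :=
          ENNReal.ofReal_le_ofReal (two_pow_mul_exp_neg_le (sub_pos.2 hα) hδ₀0 hM)
  rw [tsub_le_iff_right, ← measure_univ (μ := P)]
  exact (measure_univ_le_add_compl G).trans (add_le_add le_rfl hGc)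

/-- For a low-complexity system with parameters `(α₀, K₀)`, if `α > α₀`,
`δ₀ ∈ (0,1)` and `M ≥ (K₀ log 2 + log (1/δ₀)) / (α - α₀)`, then with probability at least
`1 - δ₀` the observed mass after `M` samples is at least `1 - α`. -/
theorem lowComplexity_sample_complexity
    {Ω : Type*} [MeasurableSpace Ω] (P : Measure Ω) [IsProbabilityMeasure P]
    {B : Type*} [Fintype B] [Nonempty B] [DecidableEq B]
    [MeasurableSpace B] [MeasurableSingletonClass B]
    (μ : Measure B) [IsProbabilityMeasure μ]
    (ω : ℕ → Ω → B)
    (hmeas : ∀ i, Measurable (ω i))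
    (hindep : iIndepFun ω P)
    (hdist : ∀ i, Measure.map (ω i) P = μ)
    (α₀ : ℝ) (hα₀0 : 0 ≤ α₀) (hα₀1 : α₀ < 1) (K₀ : ℕ) (hK₀ : 1 ≤ K₀)
    (hlow : ∃ I : Finset B, I.card ≤ K₀ ∧ 1 - α₀ < (μ (I : Set B)).toReal)
    (α : ℝ) (hα : α₀ < α) (δ₀ : ℝ) (hδ₀0 : 0 < δ₀) (hδ₀1 : δ₀ < 1)
    (M : ℕ) (hM₁ : 1 ≤ M)
    (hM : ((K₀ : ℝ) * Real.log 2 + Real.log (1 / δ₀)) / (α - α₀) ≤ (M : ℝ)) :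
    1 - ENNReal.ofReal δ₀
      ≤ P {x | 1 - α ≤ (μ {b | ∃ i ∈ Finset.Icc 1 M, ω i x = b}).toReal} :=
  lowComplexity_sample_complexity_general P μ ω hindep hdist α₀ K₀ hlow α hα δ₀ hδ₀0 M hM
end
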